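/- Let (x_m)_{m∈ℤ} be defined in ℚ(x_1,x_2) by x_{m-1} x_{m+1} = x_m^2 + 1 with x_1, x_2 the indeterminates. Then for every n ≥ 0, x_{-n} = x_1^{-n} x_2^{-(n+1)} ( x_1^{2(n+1)} + Σ_{q+r ≤ n} C(n+1-r, q) C(n-q, r) x_1^{2q} x_2^{2r} ). -/

import Mathlib

noncomputable section

/-- The ambient field `ℚ(x₁, x₂)` of rational functions in two variables. -/
abbrev Kfield : Type := FractionRing (MvPolynomial (Fin 2) ℚ)

/-- The first indeterminate `x₁`. -/
def X1 : Kfield := algebraMap (MvPolynomial (Fin 2) ℚ) Kfield (MvPolynomial.X 0)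

/-- The second indeterminate `x₂`. -/
def X2 : Kfield := algebraMap (MvPolynomial (Fin 2) ℚ) Kfield (MvPolynomial.X 1)

def dd (n q r : ℕ) : ℕ := (n + 1 - r).choose q * (n - q).choose r

def sL (n q r : ℕ) : ℕ := match q with | 0 => 0 | Nat.succ q => dd n q r
def sR (n q r : ℕ) : ℕ := match r with | 0 => 0 | Nat.succ r => dd n q r
def sB (n q r : ℕ) : ℕ := match q, r with | Nat.succ q, Nat.succ r => dd n q r | _, _ => 0

@[simp] lemma sL_zero (n r : ℕ) : sL n 0 r = 0 := rfl
@[simp] lemma sL_succ (n q r : ℕ) : sL n (q+1) r = dd n q r := rfl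
@[simp] lemma sR_zero (n q : ℕ) : sR n q 0 = 0 := rfl
@[simp] lemma sR_succ (n q r : ℕ) : sR n q (r+1) = dd n q r := rfl
@[simp] lemma sB_zero_left (n r : ℕ) : sB n 0 r = 0 := by cases r <;> rfl
@[simp] lemma sB_zero_right (n q : ℕ) : sB n q 0 = 0 := by cases q <;> rfl
@[simp] lemma sB_succ (n q r : ℕ) : sB n (q+1) (r+1) = dd n q r := rfl

def Pp (n N : ℕ) : Kfield :=
  ∑ q ∈ Finset.range N, ∑ r ∈ Finset.range N, (dd n q r : Kfield) * X1 ^ (2*q) * X2 ^ (2*r)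

lemma d_vanish {n q r : ℕ} (h : n + 1 - r < q ∨ n - q < r) : dd n q r = 0 := by
  unfold dd
  rcases h with h | h
  · rw [Nat.choose_eq_zero_of_lt h, zero_mul]
  · rw [Nat.choose_eq_zero_of_lt h, mul_zero]

lemma Pp_ext {n N : ℕ} (h : n + 2 ≤ N) : Pp n (N + 1) = Pp n N := by
  unfold Pp
  rw [Finset.sum_range_succ]
  have hlast : ∑ r ∈ Finset.range (N+1), (dd n N r : Kfield) * X1^(2*N) * X2^(2*r) = 0 := by
    apply Finset.sum_eq_zero
    intro r _
    rw [d_vanish (Or.inl (by omega))]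
    simp
  rw [hlast, add_zero]
  apply Finset.sum_congr rfl
  intro q hq
  rw [Finset.sum_range_succ, d_vanish (Or.inr (by omega))]
  simp

lemma d_key (n q r : ℕ) :
    dd (n+2) q r + sB n q r
    = sL (n+1) q r + (sR (n+1) q r + dd (n+1) q r) := by
  match q, r with
  | 0, 0 => simp [dd]
  | 0, r+1 =>
    simp only [sB_zero_left, sL_zero, sR_succ, zero_add, add_zero]
    simp only [dd, Nat.choose_zero_right, one_mul, Nat.sub_zero]
    rw [show n+2 = n+1+1 from rfl, Nat.choose_succ_succ (n+1) r]
  | q+1, 0 =>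
    simp only [sB_zero_right, sL_succ, sR_zero, zero_add, add_zero]
    simp only [dd, Nat.choose_zero_right, Nat.sub_zero, mul_one]
    simp [Nat.choose_succ_succ (n+2) q]
  | q+1, r+1 =>
    simp only [sB_succ, sL_succ, sR_succ]
    simp only [dd]
    rw [show n+2+1-(r+1) = n+2-r by omega, show n+2-(q+1) = n+1-q by omega,
        show n+1+1-(r+1) = n+1-r by omega, show n+1-(q+1) = n-q by omega]
    by_cases hq : q ≤ n
    · by_cases hr : r ≤ n + 1
      · rw [show n+2-r = (n+1-r)+1 by omega, show n+1-q = (n-q)+1 by omega,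
            Nat.choose_succ_succ (n+1-r) q, Nat.choose_succ_succ (n-q) r]
        ring
      · rw [show n+1-r = 0 by omega, show n+2-r = 0 by omega,
            Nat.choose_eq_zero_of_lt (show n-q < r by omega),
            Nat.choose_eq_zero_of_lt (show n-q < r+1 by omega),
            Nat.choose_eq_zero_of_lt (show n+1-q < r+1 by omega)]
        simp
    · rw [show n-q = 0 by omega, show n+1-q = 0 by omega]
      rcases r with _ | r
      · simp only [Nat.choose_self, Nat.choose_zero_succ, Nat.sub_zero, mul_zero, zero_mul,
          Nat.choose_zero_right, mul_one, add_zero, zero_add]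
        by_cases hq2 : q = n + 1
        · subst hq2; simp [Nat.choose_self]
        · rw [Nat.choose_eq_zero_of_lt (show n+1 < q by omega),
              Nat.choose_eq_zero_of_lt (show n+2 < q+1 by omega)]
      · simp [Nat.choose_zero_succ,
          Nat.choose_eq_zero_of_lt (show (0:ℕ) < r+1 by omega)]

lemma Pp_val (n : ℕ) :
    Pp n (n+2) = X1 ^ (2*(n+1)) + ∑ q ∈ Finset.range (n+1), ∑ r ∈ Finset.range (n+1-q),
      (dd n q r : Kfield) * X1^(2*q) * X2^(2*r) := by
  unfold Pp
  rw [Finset.sum_range_succ]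
  have hlast : ∑ r ∈ Finset.range (n+2), (dd n (n+1) r : Kfield) * X1^(2*(n+1)) * X2^(2*r)
      = X1^(2*(n+1)) := by
    rw [Finset.sum_eq_single 0]
    · simp [dd]
    · intro r _ hr
      rw [d_vanish (Or.inr (by omega))]
      simp
    · intro h; exact absurd (Finset.mem_range.2 (by omega)) h
  rw [hlast, add_comm]
  congr 1
  apply Finset.sum_congr rfl
  intro q hq
  have hq' : q < n + 1 := Finset.mem_range.1 hq
  refine (Finset.sum_subset ?_ ?_).symm
  · intro r hr
    exact Finset.mem_range.2 (by have := Finset.mem_range.1 hr; omega)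
  · intro r hr1 hr2
    have hA : r < n + 2 := Finset.mem_range.1 hr1
    have hB : ¬ r < n + 1 - q := fun hc => hr2 (Finset.mem_range.2 hc)
    rw [d_vanish (Or.inr (by omega))]
    simp

lemma mono_shift1 (c : Kfield) (q r : ℕ) :
    X1^2 * (c * X1^(2*q) * X2^(2*r)) = c * X1^(2*(q+1)) * X2^(2*r) := by
  rw [Nat.mul_add, pow_add]; ring

lemma mono_shift2 (c : Kfield) (q r : ℕ) :
    X2^2 * (c * X1^(2*q) * X2^(2*r)) = c * X1^(2*q) * X2^(2*(r+1)) := by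
  rw [Nat.mul_add 2 r 1, pow_add]; ring

lemma L1 {n N : ℕ} (h : n + 2 ≤ N) :
    X1^2 * Pp n N = ∑ q ∈ Finset.range (N+1), ∑ r ∈ Finset.range (N+1),
      ((sL n q r : ℕ) : Kfield) * X1^(2*q) * X2^(2*r) := by
  rw [Finset.sum_range_succ']
  have h0 : ∑ r ∈ Finset.range (N+1),
      ((sL n 0 r : ℕ) : Kfield) * X1^(2*0) * X2^(2*r) = 0 := by
    apply Finset.sum_eq_zero; intro r _; simp
  rw [h0, add_zero]
  unfold Pp
  rw [Finset.mul_sum]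
  apply Finset.sum_congr rfl
  intro q _
  rw [Finset.sum_range_succ, sL_succ,
      d_vanish (n:=n) (q:=q) (r:=N) (Or.inr (by omega))]
  simp only [Nat.cast_zero, zero_mul, add_zero]
  rw [Finset.mul_sum]
  apply Finset.sum_congr rfl
  intro r _
  rw [sL_succ]
  exact mono_shift1 _ q r

lemma L2 {n N : ℕ} (h : n + 2 ≤ N) :
    X2^2 * Pp n N = ∑ q ∈ Finset.range (N+1), ∑ r ∈ Finset.range (N+1),
      ((sR n q r : ℕ) : Kfield) * X1^(2*q) * X2^(2*r) := by
  have hswap : Pp n N = ∑ r ∈ Finset.range N, ∑ q ∈ Finset.range N,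
      (dd n q r : Kfield) * X1^(2*q) * X2^(2*r) := Finset.sum_comm
  rw [Finset.sum_comm]
  rw [Finset.sum_range_succ']
  have h0 : ∑ q ∈ Finset.range (N+1),
      ((sR n q 0 : ℕ) : Kfield) * X1^(2*q) * X2^(2*0) = 0 := by
    apply Finset.sum_eq_zero; intro q _; simp
  rw [h0, add_zero]
  rw [hswap, Finset.mul_sum]
  apply Finset.sum_congr rfl
  intro r _
  rw [Finset.sum_range_succ, sR_succ,
      d_vanish (n:=n) (q:=N) (r:=r) (Or.inl (by omega))]
  simp only [Nat.cast_zero, zero_mul, add_zero]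
  rw [Finset.mul_sum]
  apply Finset.sum_congr rfl
  intro q _
  rw [sR_succ]
  exact mono_shift2 _ q r

lemma L3 {n N : ℕ} :
    X1^2 * X2^2 * Pp n N = ∑ q ∈ Finset.range (N+1), ∑ r ∈ Finset.range (N+1),
      ((sB n q r : ℕ) : Kfield) * X1^(2*q) * X2^(2*r) := by
  rw [Finset.sum_range_succ']
  have h0 : ∑ r ∈ Finset.range (N+1),
      ((sB n 0 r : ℕ) : Kfield) * X1^(2*0) * X2^(2*r) = 0 := by
    apply Finset.sum_eq_zero; intro r _; simp
  rw [h0, add_zero]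
  unfold Pp
  rw [Finset.mul_sum]
  apply Finset.sum_congr rfl
  intro q _
  rw [Finset.sum_range_succ', sB_zero_right]
  simp only [Nat.cast_zero, zero_mul, add_zero]
  rw [Finset.mul_sum]
  apply Finset.sum_congr rfl
  intro r _
  rw [sB_succ, mul_assoc, mono_shift2, mono_shift1]

lemma Pp_rec (n : ℕ) :
    Pp (n+2) (n+4) = (X1^2 + X2^2 + 1) * Pp (n+1) (n+3) - X1^2*X2^2 * Pp n (n+2) := by
  have e1 : Pp (n+1) (n+3) = Pp (n+1) (n+4) := (Pp_ext (by omega)).symm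
  have e2 : Pp n (n+2) = Pp n (n+4) :=
    ((Pp_ext (n := n) (N := n+3) (by omega)).trans (Pp_ext (by omega))).symm
  have e3 : Pp (n+2) (n+4) = Pp (n+2) (n+5) := (Pp_ext (by omega)).symm
  have e4 : Pp (n+1) (n+4) = Pp (n+1) (n+5) := (Pp_ext (by omega)).symm
  rw [e1, e2, e3]
  have main : Pp (n+2) (n+5) + X1^2*X2^2 * Pp n (n+4)
      = X1^2 * Pp (n+1) (n+4) + X2^2 * Pp (n+1) (n+4) + Pp (n+1) (n+5) := by
    rw [L1 (by omega), L2 (by omega), L3 (N := n+4), show (n+5) = (n+4)+1 from rfl]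
    unfold Pp
    rw [← Finset.sum_add_distrib, ← Finset.sum_add_distrib, ← Finset.sum_add_distrib]
    apply Finset.sum_congr rfl
    intro q _
    rw [← Finset.sum_add_distrib, ← Finset.sum_add_distrib, ← Finset.sum_add_distrib]
    apply Finset.sum_congr rfl
    intro r _
    have hk' : ((dd (n+2) q r : ℕ) : Kfield) + ((sB n q r : ℕ) : Kfield)
        = ((sL (n+1) q r : ℕ) : Kfield)
          + (((sR (n+1) q r : ℕ) : Kfield) + ((dd (n+1) q r : ℕ) : Kfield)) := by
      exact_mod_cast congrArg (Nat.cast : ℕ → Kfield) (d_key n q r)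
    linear_combination (X1^(2*q) * X2^(2*r)) * hk'
  rw [← e4] at main
  linear_combination main

lemma X1_ne : X1 ≠ 0 := by
  simp only [X1, Ne, IsFractionRing.to_map_eq_zero_iff]
  exact MvPolynomial.X_ne_zero _

lemma X2_ne : X2 ≠ 0 := by
  simp only [X2, Ne, IsFractionRing.to_map_eq_zero_iff]
  exact MvPolynomial.X_ne_zero _

lemma no_i (y : Kfield) : y ^ 2 + 1 ≠ 0 := by
  intro h
  obtain ⟨a, b, hb, rfl⟩ := @IsFractionRing.div_surjective (MvPolynomial (Fin 2) ℚ) _ _ _ _ _ y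
  have hb0 : (b : MvPolynomial (Fin 2) ℚ) ≠ 0 := nonZeroDivisors.ne_zero hb
  have hbK : algebraMap (MvPolynomial (Fin 2) ℚ) Kfield b ≠ 0 := by
    simpa [IsFractionRing.to_map_eq_zero_iff] using hb0
  have key : algebraMap (MvPolynomial (Fin 2) ℚ) Kfield (a^2 + b^2) = 0 := by
    field_simp at h
    push_cast [map_add, map_pow]
    linear_combination h
  have key2 : (a^2 + b^2 : MvPolynomial (Fin 2) ℚ) = 0 := by
    rwa [IsFractionRing.to_map_eq_zero_iff] at key
  have : b = 0 := by
    apply MvPolynomial.funext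
    intro p
    have h5 := congrArg (MvPolynomial.eval p) key2
    simp at h5
    simp only [map_zero]
    have hb2 : MvPolynomial.eval p b ^ 2 = 0 := by
      nlinarith [sq_nonneg (MvPolynomial.eval p a), sq_nonneg (MvPolynomial.eval p b)]
    exact pow_eq_zero_iff (by norm_num) |>.mp hb2
  exact hb0 this

section seq
variable (x : ℤ → Kfield) (h1 : x 1 = X1) (h2 : x 2 = X2)
  (hrec : ∀ m : ℤ, x (m - 1) * x (m + 1) = x m ^ 2 + 1)

include hrec in
lemma x_ne (m : ℤ) : x m ≠ 0 := by
  intro h0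
  have h := hrec (m + 1)
  rw [show m + 1 - 1 = m by ring, h0, zero_mul] at h
  exact no_i _ h.symm

include h1 h2 hrec in
lemma lin (m : ℤ) : X1 * X2 * (x (m - 1) + x (m + 1)) = (X1^2 + X2^2 + 1) * x m := by
  set Q : ℤ → Prop := fun m => X1 * X2 * (x (m - 1) + x (m + 1)) = (X1^2 + X2^2 + 1) * x m with hQ
  have h0 : x 0 * X2 = X1 ^ 2 + 1 := by
    have := hrec 1
    rw [show (1:ℤ) - 1 = 0 by ring, show (1:ℤ) + 1 = 2 by ring, h1, h2] at this
    exact this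
  have base : Q 1 := by
    show X1 * X2 * (x (1 - 1) + x (1 + 1)) = (X1^2 + X2^2 + 1) * x 1
    rw [show (1:ℤ) - 1 = 0 by ring, show (1:ℤ) + 1 = 2 by ring, h1, h2]
    apply mul_left_cancel₀ X2_ne
    linear_combination X1 * X2 * h0
  have key : ∀ k : ℤ, x (k + 1) * (x (k - 1) + x (k + 1)) = x k * (x k + x (k + 2)) := by
    intro k
    have ha := hrec k
    have hb := hrec (k + 1)
    rw [show k + 1 - 1 = k by ring, show k + 1 + 1 = k + 2 by ring] at hb
    linear_combination ha - hb
  have step : ∀ k : ℤ, Q k → Q (k + 1) := by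
    intro k hk
    show X1 * X2 * (x (k + 1 - 1) + x (k + 1 + 1)) = (X1^2 + X2^2 + 1) * x (k + 1)
    rw [show k + 1 - 1 = k by ring, show k + 1 + 1 = k + 2 by ring]
    apply mul_left_cancel₀ (x_ne x hrec k)
    linear_combination x (k + 1) * hk - X1 * X2 * key k
  have bstep : ∀ k : ℤ, Q k → Q (k - 1) := by
    intro k hk
    show X1 * X2 * (x (k - 1 - 1) + x (k - 1 + 1)) = (X1^2 + X2^2 + 1) * x (k - 1)
    rw [show k - 1 - 1 = k - 2 by ring, show k - 1 + 1 = k by ring]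
    apply mul_left_cancel₀ (x_ne x hrec k)
    have hkey := key (k - 1)
    rw [show k - 1 - 1 = k - 2 by ring, show k - 1 + 1 = k by ring, show k - 1 + 2 = k + 1 by ring] at hkey
    linear_combination X1 * X2 * hkey + x (k - 1) * hk
  have all : ∀ n : ℕ, Q (1 + n) ∧ Q (1 - n) := by
    intro n
    induction n with
    | zero =>
      constructor
      · rw [show (1 + ((0:ℕ):ℤ)) = 1 by norm_num]; exact base
      · rw [show (1 - ((0:ℕ):ℤ)) = 1 by norm_num]; exact base
    | succ n ih =>
      constructor
      · have := step (1 + n) ih.1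
        rwa [show (1 + (n:ℤ)) + 1 = 1 + (n + 1 : ℕ) by push_cast; ring] at this
      · have := bstep (1 - n) ih.2
        rwa [show (1 - (n:ℤ)) - 1 = 1 - (n + 1 : ℕ) by push_cast; ring] at this
  rcases le_or_gt 1 m with h | h
  · obtain ⟨n, rfl⟩ : ∃ n : ℕ, m = 1 + n := ⟨(m - 1).toNat, by omega⟩
    exact (all n).1
  · obtain ⟨n, rfl⟩ : ∃ n : ℕ, m = 1 - n := ⟨(1 - m).toNat, by omega⟩
    exact (all n).2

include h1 h2 hrec in
lemma main_aux : ∀ n : ℕ, x (-(n : ℤ)) * X1 ^ n * X2 ^ (n + 1) = Pp n (n + 2) := by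
  have h0 : x 0 * X2 = X1 ^ 2 + 1 := by
    have := hrec 1
    rw [show (1:ℤ) - 1 = 0 by ring, show (1:ℤ) + 1 = 2 by ring, h1, h2] at this
    exact this
  have hm1 : x (-1) * X1 = x 0 ^ 2 + 1 := by
    have := hrec 0
    rw [show (0:ℤ) - 1 = -1 by ring, show (0:ℤ) + 1 = 1 by ring, h1] at this
    exact this
  have base0 : x (-(0 : ℕ) : ℤ) * X1 ^ 0 * X2 ^ (0 + 1) = Pp 0 (0 + 2) := by
    have hP : Pp 0 2 = 1 + X1 ^ 2 := by
      simp [Pp, dd, Finset.sum_range_succ]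
    push_cast
    simp only [neg_zero, pow_zero, pow_one, mul_one, one_mul]
    rw [show ((0:ℤ)) = 0 from rfl] at *
    rw [hP]
    linear_combination h0
  have base1 : x (-(1 : ℕ) : ℤ) * X1 ^ 1 * X2 ^ (1 + 1) = Pp 1 (1 + 2) := by
    have hP : Pp 1 3 = X1^4 + 2*X1^2 + 1 + X2^2 := by
      simp [Pp, dd, Finset.sum_range_succ]
      ring
    push_cast
    rw [hP]
    linear_combination X2 ^ 2 * hm1 + (x 0 * X2 + X1 ^ 2 + 1) * h0
  have step : ∀ n : ℕ,
      x (-(n : ℤ)) * X1 ^ n * X2 ^ (n + 1) = Pp n (n + 2) →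
      x (-((n+1 : ℕ) : ℤ)) * X1 ^ (n+1) * X2 ^ (n + 2) = Pp (n+1) (n + 3) →
      x (-((n+2 : ℕ) : ℤ)) * X1 ^ (n+2) * X2 ^ (n + 3) = Pp (n+2) (n + 4) := by
    intro n ih0 ih1
    have hl := lin x h1 h2 hrec (-(n : ℤ) - 1)
    rw [show -(n : ℤ) - 1 - 1 = -((n+2 : ℕ) : ℤ) by push_cast; ring,
        show -(n : ℤ) - 1 + 1 = -(n : ℤ) by ring,
        show -(n : ℤ) - 1 = -((n+1 : ℕ) : ℤ) by push_cast; ring] at hl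
    rw [Pp_rec n]
    linear_combination (X1 ^ (n+1) * X2 ^ (n+2)) * hl - (X1^2 * X2^2) * ih0
      + (X1^2 + X2^2 + 1) * ih1
  intro n
  induction n using Nat.twoStepInduction with
  | zero => exact base0
  | one => exact base1
  | more n ih0 ih1 => exact step n ih0 ih1
end seq


/-- For the bi-infinite sequence defined by `x_{m-1} x_{m+1} = x_m^2 + 1` with `x₁, x₂` the
indeterminates, for every `n ≥ 0` one has
`x_{-n} = x₁^{-n} x₂^{-(n+1)} (x₁^{2(n+1)} + ∑_{q+r ≤ n} C(n+1-r,q) C(n-q,r) x₁^{2q} x₂^{2r})`. -/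
theorem stmt8 (x : ℤ → Kfield) (h1 : x 1 = X1) (h2 : x 2 = X2)
    (hrec : ∀ m : ℤ, x (m - 1) * x (m + 1) = x m ^ 2 + 1) :
    ∀ n : ℕ, x (-(n : ℤ)) =
      X1 ^ (-(n : ℤ)) * X2 ^ (-(n + 1 : ℤ)) *
        (X1 ^ (2 * (n + 1)) +
          ∑ q ∈ Finset.range (n + 1), ∑ r ∈ Finset.range (n + 1 - q),
            (((n + 1 - r).choose q * (n - q).choose r : ℕ) : Kfield) *
              X1 ^ (2 * q) * X2 ^ (2 * r)) := by
  intro n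
  have hmain := main_aux x h1 h2 hrec n
  rw [Pp_val n] at hmain
  have hz1 : X1 ^ (-(n : ℤ)) = (X1 ^ n)⁻¹ := by
    rw [zpow_neg, zpow_natCast]
  have hz2 : X2 ^ (-(n + 1 : ℤ)) = (X2 ^ (n + 1))⁻¹ := by
    rw [show -((n : ℤ) + 1) = -(((n + 1 : ℕ) : ℤ)) by push_cast; ring, zpow_neg, zpow_natCast]
  rw [hz1, hz2]
  have hS : ∑ q ∈ Finset.range (n + 1), ∑ r ∈ Finset.range (n + 1 - q),
      (((n + 1 - r).choose q * (n - q).choose r : ℕ) : Kfield) * X1 ^ (2 * q) * X2 ^ (2 * r)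
      = ∑ q ∈ Finset.range (n + 1), ∑ r ∈ Finset.range (n + 1 - q),
      ((dd n q r : ℕ) : Kfield) * X1 ^ (2 * q) * X2 ^ (2 * r) := rfl
  rw [hS]
  have hX1 : (X1 : Kfield) ^ n ≠ 0 := pow_ne_zero _ X1_ne
  have hX2 : (X2 : Kfield) ^ (n + 1) ≠ 0 := pow_ne_zero _ X2_ne
  field_simp
  linear_combination hmain
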